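/- Every word-hyperbolic group G is biautomatic; moreover the automatic structure may be chosen so that the language of normal forms consists of geodesic words (words u with |u| = d(1, π(u)) in the word metric). -/

import Mathlib

/-!
Automatic groups: geometric characterization (fellow-traveller property).
-/

/-- Evaluation of a word over the alphabet `S` in the group `G`, via `e : S → G`. -/
def wordEval {G : Type*} [Group G] {S : Type*} (e : S → G) (w : List S) : G :=
  (w.map e).prod

/-- The word metric on `G` with respect to the (symmetric) generating map `e : S → G`. -/
noncomputable def wordDist {G : Type*} [Group G] {S : Type*} (e : S → G) (g h : G) : ℕ :=
  sInf {n : ℕ | ∃ w : List S, w.length = n ∧ wordEval e w = g⁻¹ * h}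

/-- The point reached after `j` steps along the path traced by the word `u`. -/
def pathAt {G : Type*} [Group G] {S : Type*} (e : S → G) (u : List S) (j : ℕ) : G :=
  wordEval e (u.take j)

/-- Two words `k`-fellow-travel if the corresponding paths stay at word-metric
distance at most `k` at each time. -/
def FellowTravel {G : Type*} [Group G] {S : Type*} (e : S → G) (k : ℕ) (u v : List S) : Prop :=
  ∀ j : ℕ, wordDist e (pathAt e u j) (pathAt e v j) ≤ k

/-- Evaluation of a padded letter (`none` is the padding symbol, evaluating to `1`). -/
def padEval {G : Type*} [Group G] {S : Type*} (e : S → G) : Option S → G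
  | none => 1
  | some a => e a

/-- The padded pair-word associated to two words `u`, `v`: the shorter one is
padded at its end with the padding symbol `none`. -/
def padWord {S : Type*} (u v : List S) : List (Option S × Option S) :=
  List.zip (u.map some ++ List.replicate (max u.length v.length - u.length) none)
           (v.map some ++ List.replicate (max u.length v.length - v.length) none)

/-- An automatic structure on the group `G` with (symmetric) generating alphabet `S`,
`e : S → G` being the evaluation of letters: a finite-state word acceptor `L` whose
language surjects onto `G`, and, for each padded letter `s`, a finite-state
multiplication automaton `M s` recognizing exactly the padded pairs `(u,v)` of accepted
words with `π u = π v · π s`. -/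
structure AutomaticStructure (G : Type*) [Group G] (S : Type*) (e : S → G) where
  σL : Type
  instFinL : Fintype σL
  L : DFA S σL
  σM : Option S → Type
  instFinM : ∀ s, Fintype (σM s)
  M : ∀ s : Option S, DFA (Option S × Option S) (σM s)
  surjective : ∀ g : G, ∃ u ∈ L.accepts, wordEval e u = g
  mult : ∀ (s : Option S) (u v : List S), u ∈ L.accepts → v ∈ L.accepts →
    (padWord u v ∈ (M s).accepts ↔ wordEval e u = wordEval e v * padEval e s)


/-- A biautomatic structure: an automatic structure together with, for each padded
letter `s`, a finite-state automaton `N s` recognizing exactly the padded pairs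
`(u,v)` of accepted words with `π u = π s · π v` (left multiplication). -/
structure BiautomaticStructure (G : Type*) [Group G] (S : Type*) (e : S → G)
    extends AutomaticStructure G S e where
  σN : Option S → Type
  instFinN : ∀ s, Fintype (σN s)
  N : ∀ s : Option S, DFA (Option S × Option S) (σN s)
  multLeft : ∀ (s : Option S) (u v : List S),
    u ∈ toAutomaticStructure.L.accepts → v ∈ toAutomaticStructure.L.accepts →
    (padWord u v ∈ (N s).accepts ↔ wordEval e u = padEval e s * wordEval e v)


/-- A word is geodesic if its length equals the word-metric distance from `1` to the
element it represents. -/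
def IsGeodesicWord {G : Type*} [Group G] {S : Type*} (e : S → G) (u : List S) : Prop :=
  u.length = wordDist e 1 (wordEval e u)

/-- `G` is word-hyperbolic (w.r.t. the symmetric generating alphabet `S`): there is
`δ` such that every geodesic triangle in the Cayley graph — given by geodesic words
`u, v, w` with `π u · π v · π w = 1`, with sides the path of `u` from `1`, the path of
`v` from `π u`, and the path of `w` from `π u · π v` — is `δ`-slim: every point of the
first side is at word-metric distance at most `δ` from the union of the two others. -/
def WordHyperbolic {G : Type*} [Group G] {S : Type*} (e : S → G) : Prop :=
  ∃ δ : ℕ, ∀ u v w : List S,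
    IsGeodesicWord e u → IsGeodesicWord e v → IsGeodesicWord e w →
    wordEval e u * wordEval e v * wordEval e w = 1 →
    ∀ i : ℕ, ∃ j : ℕ,
      wordDist e (pathAt e u i) (wordEval e u * pathAt e v j) ≤ δ ∨
      wordDist e (pathAt e u i) (wordEval e u * wordEval e v * pathAt e w j) ≤ δ


/-!
In a `δ`-hyperbolic group, geodesic words whose endpoints differ by at most a letter on each
side `K`-fellow travel, with `K = 4δ + 7`: cutting the geodesic quadrilateral along a diagonal
into two slim triangles puts every point of one side near the other, and since both sides are
geodesic the nearby points are reached at almost the same time.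

Fellow travelling gives both halves of the structure. The cone type of `g` (the geodesic
continuations of a geodesic to `g`) is determined by the `K`-tail `z ↦ d(1, g z) - d(1, g)` on
the `K`-ball (Cannon), so there are finitely many cone types and, by Myhill–Nerode, the geodesic
words form a regular language. For geodesics `u`, `v` with `π u = x π v y` the word differences
`π(u[..j])⁻¹ x π(v[..j])` stay in the finite `K`-ball, so the padded pairs `(u, v)` are
recognized by the finite-state automaton that tracks this difference.
-/

section WordMetric

variable {G : Type*} [Group G] {S : Type*} (e : S → G)

@[simp] lemma wordEval_nil : wordEval e [] = 1 := rfl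

@[simp] lemma wordEval_append (u v : List S) :
    wordEval e (u ++ v) = wordEval e u * wordEval e v := by
  simp [wordEval]

@[simp] lemma wordEval_cons (a : S) (w : List S) : wordEval e (a :: w) = e a * wordEval e w := by
  simp [wordEval]

lemma wordEval_singleton (a : S) : wordEval e [a] = e a := by
  simp

lemma wordEval_reverse_map_of_inv {ι : S → S} (hι : ∀ a, e (ι a) = (e a)⁻¹) (w : List S) :
    wordEval e (w.map ι).reverse = (wordEval e w)⁻¹ := by
  induction w with
  | nil => simp
  | cons a w ih => simp [ih, hι]

lemma wordDist_le_length {g h : G} {w : List S} (hw : wordEval e w = g⁻¹ * h) :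
    wordDist e g h ≤ w.length :=
  Nat.sInf_le ⟨w, rfl, hw⟩

lemma wordDist_eq_wordDist_one (g h : G) : wordDist e g h = wordDist e 1 (g⁻¹ * h) := by
  simp [wordDist]

@[simp] lemma wordDist_mul_left (x g h : G) :
    wordDist e (x * g) (x * h) = wordDist e g h := by
  rw [wordDist_eq_wordDist_one, wordDist_eq_wordDist_one e g]
  group

@[simp] lemma wordDist_self_mul (g h : G) : wordDist e g (g * h) = wordDist e 1 h := by
  simpa using wordDist_mul_left e g 1 h

@[simp] lemma wordDist_self (g : G) : wordDist e g g = 0 :=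
  Nat.le_zero.mp (wordDist_le_length e (w := []) (by simp))

lemma wordDist_one_le_length (w : List S) : wordDist e 1 (wordEval e w) ≤ w.length :=
  wordDist_le_length e (by simp)

lemma wordDist_one_padEval_le (s : Option S) : wordDist e 1 (padEval e s) ≤ 1 := by
  cases s with
  | none => simp [padEval]
  | some a => simpa [padEval] using wordDist_one_le_length e [a]

lemma wordEval_surjective_of_closure_eq_top (hsym : ∀ a : S, ∃ b : S, e b = (e a)⁻¹)
    (hgen : Subgroup.closure (Set.range e) = ⊤) : Function.Surjective (wordEval e) := by
  choose ι hι using hsym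
  intro g
  induction (hgen ▸ Subgroup.mem_top g : g ∈ Subgroup.closure (Set.range e))
    using Subgroup.closure_induction with
  | mem x hx => obtain ⟨a, rfl⟩ := hx; exact ⟨[a], wordEval_singleton e a⟩
  | one => exact ⟨[], rfl⟩
  | mul x y _ _ hx hy =>
    obtain ⟨u, rfl⟩ := hx
    obtain ⟨v, rfl⟩ := hy
    exact ⟨u ++ v, wordEval_append e u v⟩
  | inv x _ hx =>
    obtain ⟨w, rfl⟩ := hx
    exact ⟨(w.map ι).reverse, wordEval_reverse_map_of_inv e hι w⟩

variable {e} (hsurj : Function.Surjective (wordEval e))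
include hsurj

lemma exists_length_eq_wordDist (g h : G) :
    ∃ w : List S, w.length = wordDist e g h ∧ wordEval e w = g⁻¹ * h :=
  Nat.sInf_mem (s := {n | ∃ w : List S, w.length = n ∧ wordEval e w = g⁻¹ * h})
    (let ⟨w, hw⟩ := hsurj (g⁻¹ * h); ⟨w.length, w, rfl, hw⟩)

lemma wordDist_triangle (a b c : G) : wordDist e a c ≤ wordDist e a b + wordDist e b c := by
  obtain ⟨u, hu, hua⟩ := exists_length_eq_wordDist hsurj a b
  obtain ⟨v, hv, hvb⟩ := exists_length_eq_wordDist hsurj b c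
  calc wordDist e a c ≤ (u ++ v).length := wordDist_le_length e (by simp [hua, hvb, mul_assoc])
    _ = wordDist e a b + wordDist e b c := by simp [hu, hv]

lemma wordDist_one_mul_le (g h : G) : wordDist e 1 (g * h) ≤ wordDist e 1 g + wordDist e 1 h := by
  simpa using wordDist_triangle hsurj 1 g (g * h)

lemma wordDist_one_mul_mul_le (x g y : G) :
    wordDist e 1 (x * g * y) ≤ wordDist e 1 x + wordDist e 1 g + wordDist e 1 y :=
  (wordDist_one_mul_le hsurj _ _).trans (by gcongr; exact wordDist_one_mul_le hsurj _ _)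

variable (hsym : ∀ a : S, ∃ b : S, e b = (e a)⁻¹)
include hsym

lemma wordDist_one_inv (g : G) : wordDist e 1 g⁻¹ = wordDist e 1 g := by
  choose ι hι using hsym
  have key : ∀ g : G, wordDist e 1 g⁻¹ ≤ wordDist e 1 g := fun g => by
    obtain ⟨w, hw, hwg⟩ := exists_length_eq_wordDist hsurj 1 g
    rw [← hw, ← List.length_map ι, ← List.length_reverse]
    exact wordDist_le_length e (by simp [wordEval_reverse_map_of_inv e hι, hwg])
  exact le_antisymm (key g) (by simpa using key g⁻¹)

lemma wordDist_comm (g h : G) : wordDist e g h = wordDist e h g := by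
  rw [wordDist_eq_wordDist_one, ← wordDist_one_inv hsurj hsym, wordDist_eq_wordDist_one e h]
  group

end WordMetric

section Geodesic

variable {G : Type*} [Group G] {S : Type*} {e : S → G}

@[simp] lemma pathAt_zero (u : List S) : pathAt e u 0 = 1 := rfl

lemma pathAt_of_length_le {u : List S} {j : ℕ} (h : u.length ≤ j) :
    pathAt e u j = wordEval e u := by
  rw [pathAt, List.take_of_length_le h]

lemma pathAt_eq_pathAt_min (u : List S) (j : ℕ) : pathAt e u j = pathAt e u (min j u.length) := by
  rw [pathAt, pathAt, List.take_eq_take_min]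

lemma pathAt_reverse_map_of_inv {ι : S → S} (hι : ∀ a, e (ι a) = (e a)⁻¹) (w : List S)
    (j : ℕ) :
    pathAt e (w.map ι).reverse j = (wordEval e w)⁻¹ * pathAt e w (w.length - j) := by
  rw [pathAt, List.take_reverse, List.length_map, ← List.map_drop,
    wordEval_reverse_map_of_inv e hι, pathAt]
  have hw := wordEval_append e (w.take (w.length - j)) (w.drop (w.length - j))
  rw [List.take_append_drop] at hw
  rw [hw]
  group

/-- The cone type of `g`: the words continuing a geodesic to `g` geodesically. -/
def coneType (e : S → G) (g : G) : Language S :=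
  {w | wordDist e 1 (g * wordEval e w) = wordDist e 1 g + w.length}

lemma mem_coneType {g : G} {w : List S} :
    w ∈ coneType e g ↔ wordDist e 1 (g * wordEval e w) = wordDist e 1 g + w.length :=
  Iff.rfl

def geodesicLanguage (e : S → G) : Language S := {u | IsGeodesicWord e u}

lemma mem_geodesicLanguage {u : List S} : u ∈ geodesicLanguage e ↔ IsGeodesicWord e u := Iff.rfl

variable (hsurj : Function.Surjective (wordEval e))
include hsurj

lemma exists_isGeodesicWord (g : G) : ∃ u : List S, IsGeodesicWord e u ∧ wordEval e u = g := by
  obtain ⟨u, hu, hug⟩ := exists_length_eq_wordDist hsurj 1 g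
  rw [inv_one, one_mul] at hug
  exact ⟨u, by rw [IsGeodesicWord, hug, hu], hug⟩

lemma isGeodesicWord_append_iff (u w : List S) :
    IsGeodesicWord e (u ++ w) ↔ IsGeodesicWord e u ∧ w ∈ coneType e (wordEval e u) := by
  have hu := wordDist_one_le_length e u
  have huw := wordDist_one_mul_le hsurj (wordEval e u) (wordEval e w)
  have hw := wordDist_one_le_length e w
  rw [IsGeodesicWord, IsGeodesicWord, mem_coneType, wordEval_append, List.length_append]
  omega

lemma IsGeodesicWord.take {u : List S} (hu : IsGeodesicWord e u) (j : ℕ) :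
    IsGeodesicWord e (u.take j) :=
  ((isGeodesicWord_append_iff hsurj _ _).mp ((List.take_append_drop j u).symm ▸ hu)).1

lemma IsGeodesicWord.wordDist_one_pathAt {u : List S} (hu : IsGeodesicWord e u) (j : ℕ) :
    wordDist e 1 (pathAt e u j) = min j u.length := by
  rw [pathAt, ← hu.take hsurj j, List.length_take]

variable (hsym : ∀ a : S, ∃ b : S, e b = (e a)⁻¹)
include hsym

lemma IsGeodesicWord.reverse_map_of_inv {ι : S → S} (hι : ∀ a, e (ι a) = (e a)⁻¹)
    {u : List S} (hu : IsGeodesicWord e u) : IsGeodesicWord e (u.map ι).reverse := by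
  rw [IsGeodesicWord, wordEval_reverse_map_of_inv e hι, wordDist_one_inv hsurj hsym,
    List.length_reverse, List.length_map]
  exact hu

lemma wordDist_pathAt_pathAt_le (u : List S) (i j : ℕ) :
    wordDist e (pathAt e u i) (pathAt e u j) ≤ Nat.dist (min i u.length) (min j u.length) := by
  wlog hij : min i u.length ≤ min j u.length generalizing i j
  · rw [wordDist_comm hsurj hsym, Nat.dist_comm]
    exact this j i (by omega)
  rw [pathAt_eq_pathAt_min u i, pathAt_eq_pathAt_min u j, pathAt, pathAt,
    ← List.take_append_drop (min i u.length) (u.take (min j u.length)), List.take_take,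
    min_eq_left hij, wordEval_append, wordDist_self_mul, Nat.dist_eq_sub_of_le hij]
  refine (wordDist_one_le_length e _).trans ?_
  simp

lemma wordDist_pathAt_wordEval_le (u : List S) (j : ℕ) :
    wordDist e (pathAt e u j) (wordEval e u) ≤ u.length - min j u.length := by
  have := wordDist_pathAt_pathAt_le hsurj hsym u j u.length
  rwa [min_self, pathAt_of_length_le le_rfl, Nat.dist_eq_sub_of_le (min_le_right _ _)]
    at this

lemma IsGeodesicWord.length_le {u v : List S} (hv : IsGeodesicWord e v) {x y : G}
    (h : wordEval e u = x * wordEval e v * y) :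
    v.length ≤ u.length + wordDist e 1 x + wordDist e 1 y := by
  have hxy := wordDist_one_mul_mul_le hsurj x⁻¹ (wordEval e u) y⁻¹
  rw [h, wordDist_one_inv hsurj hsym, wordDist_one_inv hsurj hsym,
    show x⁻¹ * (x * wordEval e v * y) * y⁻¹ = wordEval e v by group, ← hv, ← h] at hxy
  have := wordDist_one_le_length e u
  omega

end Geodesic

section FellowTravel

variable {G : Type*} [Group G] {S : Type*} {e : S → G}

def SlimTriangles (e : S → G) (δ : ℕ) : Prop :=
  ∀ u v w : List S,
    IsGeodesicWord e u → IsGeodesicWord e v → IsGeodesicWord e w →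
    wordEval e u * wordEval e v * wordEval e w = 1 →
    ∀ i : ℕ, ∃ j : ℕ,
      wordDist e (pathAt e u i) (wordEval e u * pathAt e v j) ≤ δ ∨
      wordDist e (pathAt e u i) (wordEval e u * wordEval e v * pathAt e w j) ≤ δ

def GeodesicsFellowTravel (e : S → G) (K : ℕ) : Prop :=
  ∀ u v : List S, IsGeodesicWord e u → IsGeodesicWord e v → ∀ x y : G,
    wordDist e 1 x ≤ 1 → wordDist e 1 y ≤ 1 → wordEval e u = x * wordEval e v * y →
    ∀ j, wordDist e (pathAt e u j) (x * pathAt e v j) ≤ K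

variable (hsurj : Function.Surjective (wordEval e)) (hsym : ∀ a : S, ∃ b : S, e b = (e a)⁻¹)
include hsurj hsym

lemma IsGeodesicWord.wordDist_pathAt_le_of_wordDist_pathAt {u v : List S}
    (hu : IsGeodesicWord e u) (hv : IsGeodesicWord e v) (x : G) {c : ℕ}
    (huv : u.length ≤ v.length + c) (hvu : v.length ≤ u.length + c) (i j : ℕ) :
    wordDist e (pathAt e u i) (x * pathAt e v i) ≤
      2 * wordDist e (pathAt e u i) (x * pathAt e v j) + wordDist e 1 x + c := by
  have hui := hu.wordDist_one_pathAt hsurj i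
  have hvj := hv.wordDist_one_pathAt hsurj j
  have hvji := wordDist_pathAt_pathAt_le hsurj hsym v j i
  have h1 := wordDist_triangle hsurj 1 x (x * pathAt e v j)
  have h2 := wordDist_triangle hsurj x 1 (x * pathAt e v j)
  have h3 := wordDist_triangle hsurj 1 (pathAt e u i) (x * pathAt e v j)
  have h4 := wordDist_triangle hsurj 1 (x * pathAt e v j) (pathAt e u i)
  have h5 := wordDist_triangle hsurj (pathAt e u i) (x * pathAt e v j) (x * pathAt e v i)
  rw [wordDist_self_mul] at h1 h2
  rw [wordDist_mul_left] at h5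
  rw [wordDist_comm hsurj hsym x 1] at h2
  rw [wordDist_comm hsurj hsym (x * pathAt e v j)] at h4
  simp only [Nat.dist] at hvji
  omega

lemma SlimTriangles.exists_near {δ : ℕ} (hδ : SlimTriangles e δ) {u s v : List S}
    (hu : IsGeodesicWord e u) (hs : IsGeodesicWord e s) (hv : IsGeodesicWord e v)
    (h : wordEval e s * wordEval e v = wordEval e u) (i : ℕ) :
    ∃ j, wordDist e (pathAt e u i) (wordEval e s * pathAt e v j) ≤ δ ∨
      wordDist e (pathAt e u i) (pathAt e s j) ≤ δ := by
  obtain ⟨ι, hι⟩ := Classical.axiomOfChoice hsym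
  obtain ⟨j, hj | hj⟩ := hδ u (v.map ι).reverse (s.map ι).reverse hu
    (hv.reverse_map_of_inv hsurj hsym hι) (hs.reverse_map_of_inv hsurj hsym hι)
    (by rw [wordEval_reverse_map_of_inv e hι, wordEval_reverse_map_of_inv e hι, ← h]; group) i
  · refine ⟨v.length - j, Or.inl ?_⟩
    rw [pathAt_reverse_map_of_inv hι] at hj
    convert hj using 2
    rw [← h]
    group
  · refine ⟨s.length - j, Or.inr ?_⟩
    rw [pathAt_reverse_map_of_inv hι, wordEval_reverse_map_of_inv e hι] at hj
    convert hj using 2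
    rw [← h]
    group

/-- Cut the quadrilateral along the diagonal from `1` to `x * π v` into two slim triangles. -/
lemma SlimTriangles.exists_near_translate {δ : ℕ} (hδ : SlimTriangles e δ) {u v : List S}
    (hu : IsGeodesicWord e u) (hv : IsGeodesicWord e v) {x y : G}
    (h : wordEval e u = x * wordEval e v * y) (i : ℕ) :
    ∃ j, wordDist e (pathAt e u i) (x * pathAt e v j) ≤
      2 * δ + wordDist e 1 x + wordDist e 1 y := by
  obtain ⟨w, hw, hwe⟩ := exists_isGeodesicWord hsurj (x * wordEval e v)
  obtain ⟨a, ha, hae⟩ := exists_isGeodesicWord hsurj x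
  obtain ⟨b, hb, hbe⟩ := exists_isGeodesicWord hsurj y
  obtain ⟨j, hj | hj⟩ := hδ.exists_near hsurj hsym hu hw hb (by rw [hwe, hbe, h]) i
  · refine ⟨v.length, ?_⟩
    have hbj : wordDist e (wordEval e w * pathAt e b j) (wordEval e w) ≤ wordDist e 1 y := by
      rw [wordDist_comm hsurj hsym, wordDist_self_mul, hb.wordDist_one_pathAt hsurj, ← hbe,
        ← hb]
      exact min_le_right _ _
    have := wordDist_triangle hsurj (pathAt e u i) (wordEval e w * pathAt e b j) (wordEval e w)
    rw [pathAt_of_length_le le_rfl, ← hwe]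
    omega
  · obtain ⟨k, hk | hk⟩ := hδ.exists_near hsurj hsym hw ha hv (by rw [hae, hwe]) j
    · refine ⟨k, ?_⟩
      rw [hae] at hk
      have := wordDist_triangle hsurj (pathAt e u i) (pathAt e w j) (x * pathAt e v k)
      omega
    · refine ⟨0, ?_⟩
      have hak := wordDist_pathAt_wordEval_le hsurj hsym a k
      rw [hae] at hak
      have hax : a.length = wordDist e 1 x := hae ▸ ha
      rw [pathAt_zero, mul_one]
      have := wordDist_triangle hsurj (pathAt e u i) (pathAt e w j) (pathAt e a k)
      have := wordDist_triangle hsurj (pathAt e u i) (pathAt e a k) x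
      omega

lemma SlimTriangles.geodesicsFellowTravel {δ : ℕ} (hδ : SlimTriangles e δ) :
    GeodesicsFellowTravel e (4 * δ + 7) := by
  intro u v hu hv x y hx hy h i
  obtain ⟨j, hj⟩ := hδ.exists_near_translate hsurj hsym hu hv h i
  have hvu := hv.length_le hsurj hsym h
  have huv := hu.length_le hsurj hsym (show wordEval e v = x⁻¹ * wordEval e u * y⁻¹ by
    rw [h]; group)
  rw [wordDist_one_inv hsurj hsym, wordDist_one_inv hsurj hsym] at huv
  have := hu.wordDist_pathAt_le_of_wordDist_pathAt hsurj hsym hv x (c := 2) (by omega)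
    (by omega) i j
  omega

end FellowTravel

section ConeType

variable {G : Type*} [Group G] {S : Type*} {e : S → G}
  (hsurj : Function.Surjective (wordEval e))
include hsurj

lemma finite_setOf_wordDist_one_le [Finite S] (K : ℕ) :
    {z : G | wordDist e 1 z ≤ K}.Finite := by
  refine ((List.finite_length_le S K).image (wordEval e)).subset fun z hz => ?_
  obtain ⟨w, hw, hwz⟩ := exists_length_eq_wordDist hsurj 1 z
  exact ⟨w, hw.trans_le hz, by simpa using hwz⟩

lemma mem_coneType_of_append_mem {g : G} {w w' : List S} (h : w ++ w' ∈ coneType e g) :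
    w ∈ coneType e g := by
  have h₁ := wordDist_one_mul_le hsurj (g * wordEval e w) (wordEval e w')
  have h₂ := wordDist_one_mul_le hsurj g (wordEval e w)
  have h₃ := wordDist_one_le_length e w
  have h₄ := wordDist_one_le_length e w'
  rw [mem_coneType, wordEval_append, List.length_append, ← mul_assoc] at h
  rw [mem_coneType]
  omega

lemma leftQuotient_geodesicLanguage_mem (u : List S) :
    (geodesicLanguage e).leftQuotient u ∈ insert 0 (Set.range (coneType e)) := by
  by_cases hu : IsGeodesicWord e u
  · refine Or.inr ⟨wordEval e u, Language.ext fun w => ?_⟩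
    rw [Language.mem_leftQuotient, mem_geodesicLanguage, isGeodesicWord_append_iff hsurj]
    exact (and_iff_right hu).symm
  · refine Or.inl (Language.ext fun w => ?_)
    rw [Language.mem_leftQuotient, mem_geodesicLanguage, isGeodesicWord_append_iff hsurj]
    exact iff_of_false (fun h => hu h.1) (Language.notMem_zero w)

variable (hsym : ∀ a : S, ∃ b : S, e b = (e a)⁻¹) {K : ℕ} (hK : GeodesicsFellowTravel e K)
include hsym hK

/-- The shortcut `z` is the point at time `d(1, h)` of a geodesic to `h * π (w ++ [a])`, which
fellow travels with a geodesic through `h`. -/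
lemma append_singleton_notMem_coneType_iff {h : G} {w : List S} (hw : w ∈ coneType e h)
    (a : S) :
    w ++ [a] ∉ coneType e h ↔ ∃ z, wordDist e 1 z ≤ K ∧
      (wordDist e 1 (h * z) : ℤ) - wordDist e 1 h + wordDist e z (wordEval e (w ++ [a]))
        ≤ w.length := by
  have hup := wordDist_one_mul_le hsurj h (wordEval e (w ++ [a]))
  have hwa := wordDist_one_le_length e (w ++ [a])
  rw [List.length_append, List.length_singleton] at hwa
  constructor
  · intro hna
    rw [mem_coneType, List.length_append, List.length_singleton] at hna
    obtain ⟨ρ, hρ, hρh⟩ := exists_isGeodesicWord hsurj h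
    obtain ⟨α, hα, hαe⟩ := exists_isGeodesicWord hsurj (h * wordEval e (w ++ [a]))
    have hρw : IsGeodesicWord e (ρ ++ w) :=
      (isGeodesicWord_append_iff hsurj ρ w).mpr ⟨hρ, hρh ▸ hw⟩
    have hft := hK α (ρ ++ w) hα hρw 1 (e a) (by simp)
      (by simpa using wordDist_one_le_length e [a]) (by simp [hαe, hρh, mul_assoc]) ρ.length
    have hρwm : pathAt e (ρ ++ w) ρ.length = h := by rw [pathAt, List.take_left, hρh]
    rw [one_mul, hρwm] at hft
    have hαm := hα.wordDist_one_pathAt hsurj ρ.length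
    have hαend := wordDist_pathAt_wordEval_le hsurj hsym α ρ.length
    have hαlen : α.length = wordDist e 1 (h * wordEval e (w ++ [a])) := hαe ▸ hα
    have hρlen : ρ.length = wordDist e 1 h := hρh ▸ hρ
    refine ⟨h⁻¹ * pathAt e α ρ.length, ?_, ?_⟩
    · rwa [← wordDist_eq_wordDist_one, wordDist_comm hsurj hsym]
    · rw [mul_inv_cancel_left, ← wordDist_mul_left e h (h⁻¹ * _), mul_inv_cancel_left,
        ← hαe]
      omega
  · rintro ⟨z, -, hz⟩ hmem
    have htri := wordDist_triangle hsurj 1 (h * z) (h * wordEval e (w ++ [a]))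
    rw [wordDist_mul_left] at htri
    rw [mem_coneType, List.length_append, List.length_singleton] at hmem
    omega

lemma coneType_le_of_tail_eq {g h : G}
    (htail : ∀ z, wordDist e 1 z ≤ K →
      (wordDist e 1 (g * z) : ℤ) - wordDist e 1 g =
        (wordDist e 1 (h * z) : ℤ) - wordDist e 1 h) :
    coneType e g ≤ coneType e h := by
  intro w
  induction w using List.reverseRecOn with
  | nil => exact fun _ => by simp [coneType]
  | append_singleton w a ih =>
    intro hwa
    have hw := mem_coneType_of_append_mem hsurj hwa
    by_contra hna
    obtain ⟨z, hz, hshort⟩ :=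
      (append_singleton_notMem_coneType_iff hsurj hsym hK (ih hw) a).mp hna
    exact (append_singleton_notMem_coneType_iff hsurj hsym hK hw a).mpr
      ⟨z, hz, by rwa [htail z hz]⟩ hwa

lemma finite_range_coneType [Finite S] : (Set.range (coneType e)).Finite := by
  have : Finite {z : G // wordDist e 1 z ≤ K} := (finite_setOf_wordDist_one_le hsurj K).to_subtype
  have htail_mem : ∀ (g : G) (z : {z : G // wordDist e 1 z ≤ K}),
      (wordDist e 1 (g * z) : ℤ) - wordDist e 1 g ∈ Set.Icc (-(K : ℤ)) K := fun g z => by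
    have h₁ := wordDist_triangle hsurj 1 g (g * z)
    have h₂ := wordDist_triangle hsurj 1 (g * z) g
    rw [wordDist_comm hsurj hsym (g * z), wordDist_self_mul] at h₂
    rw [wordDist_self_mul] at h₁
    have := z.2
    constructor <;> omega
  let tail : G → {z : G // wordDist e 1 z ≤ K} → Set.Icc (-(K : ℤ)) K :=
    fun g z => ⟨_, htail_mem g z⟩
  have hfactor : Function.FactorsThrough (coneType e) tail := fun g h hgh => by
    have htail : ∀ z, wordDist e 1 z ≤ K → (wordDist e 1 (g * z) : ℤ) - wordDist e 1 g =
        (wordDist e 1 (h * z) : ℤ) - wordDist e 1 h := fun z hz =>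
      congrArg Subtype.val (congrFun hgh ⟨z, hz⟩)
    exact le_antisymm (coneType_le_of_tail_eq hsurj hsym hK htail)
      (coneType_le_of_tail_eq hsurj hsym hK fun z hz => (htail z hz).symm)
  refine (Set.finite_range (Function.extend tail (coneType e) 0)).subset ?_
  rintro _ ⟨g, rfl⟩
  exact ⟨tail g, hfactor.extend_apply 0 g⟩

lemma isRegular_geodesicLanguage [Finite S] : (geodesicLanguage e).IsRegular :=
  .of_finite_range_leftQuotient <| ((finite_range_coneType hsurj hsym hK).insert 0).subset <|
    Set.range_subset_iff.mpr (leftQuotient_geodesicLanguage_mem hsurj)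

end ConeType

lemma List.forall_take_append_iff {α : Type*} (P : List α → Prop) (l₁ l₂ : List α) :
    (∀ j, P ((l₁ ++ l₂).take j)) ↔ (∀ j, P (l₁.take j)) ∧ ∀ j, P (l₁ ++ l₂.take j) := by
  constructor
  · intro h
    refine ⟨fun j => ?_, fun j => by simpa [List.take_length_add_append] using h (l₁.length + j)⟩
    rcases le_total j l₁.length with hj | hj
    · simpa [List.take_append_of_le_length hj] using h j
    · simpa [List.take_of_length_le hj] using h l₁.length
  · rintro ⟨h₁, h₂⟩ j
    rw [List.take_append]
    rcases le_total j l₁.length with hj | hj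
    · simpa [Nat.sub_eq_zero_of_le hj] using h₁ j
    · simpa [List.take_of_length_le hj] using h₂ (j - l₁.length)

section WordDifference

variable {G : Type*} [Group G] {S : Type*} (e : S → G)

def pairDiff (d₀ : G) (l : List (Option S × Option S)) : G :=
  (wordEval (padEval e) (l.map Prod.fst))⁻¹ * d₀ * wordEval (padEval e) (l.map Prod.snd)

def wordDifferenceLanguage (K : ℕ) (d₀ tgt : G) : Language (Option S × Option S) :=
  {l | (∀ j, wordDist e 1 (pairDiff e d₀ (l.take j)) ≤ K) ∧ pairDiff e d₀ l = tgt}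

variable {e}

lemma mem_wordDifferenceLanguage {K : ℕ} {d₀ tgt : G} {l : List (Option S × Option S)} :
    l ∈ wordDifferenceLanguage e K d₀ tgt ↔
      (∀ j, wordDist e 1 (pairDiff e d₀ (l.take j)) ≤ K) ∧ pairDiff e d₀ l = tgt :=
  Iff.rfl

lemma pairDiff_append (d₀ : G) (l₁ l₂ : List (Option S × Option S)) :
    pairDiff e d₀ (l₁ ++ l₂) = pairDiff e (pairDiff e d₀ l₁) l₂ := by
  simp only [pairDiff, List.map_append, wordEval_append]
  group

lemma leftQuotient_wordDifferenceLanguage_mem (K : ℕ) (d₀ tgt : G)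
    (l : List (Option S × Option S)) :
    (wordDifferenceLanguage e K d₀ tgt).leftQuotient l ∈
      insert 0 ((wordDifferenceLanguage e K · tgt) '' {d | wordDist e 1 d ≤ K}) := by
  by_cases hl : ∀ j, wordDist e 1 (pairDiff e d₀ (l.take j)) ≤ K
  · refine Or.inr ⟨pairDiff e d₀ l, by simpa using hl l.length, Language.ext fun l' => ?_⟩
    have hsplit :=
      List.forall_take_append_iff (fun l'' => wordDist e 1 (pairDiff e d₀ l'') ≤ K) l l'
    simp only [pairDiff_append] at hsplit
    rw [Language.mem_leftQuotient, mem_wordDifferenceLanguage, mem_wordDifferenceLanguage,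
      hsplit, pairDiff_append, and_iff_right hl]
  · refine Or.inl (Language.ext fun l' => iff_of_false ?_ (Language.notMem_zero l'))
    rw [Language.mem_leftQuotient, mem_wordDifferenceLanguage,
      List.forall_take_append_iff (fun l'' => wordDist e 1 (pairDiff e d₀ l'') ≤ K)]
    exact fun h => hl h.1.1

lemma isRegular_wordDifferenceLanguage [Finite S] (hsurj : Function.Surjective (wordEval e))
    (K : ℕ) (d₀ tgt : G) : (wordDifferenceLanguage e K d₀ tgt).IsRegular :=
  .of_finite_range_leftQuotient <|
    (((finite_setOf_wordDist_one_le hsurj K).image _).insert 0).subset <|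
      Set.range_subset_iff.mpr (leftQuotient_wordDifferenceLanguage_mem K d₀ tgt)

lemma map_fst_padWord (u v : List S) :
    (padWord u v).map Prod.fst =
      u.map some ++ List.replicate (max u.length v.length - u.length) none :=
  List.map_fst_zip (by simp)

lemma map_snd_padWord (u v : List S) :
    (padWord u v).map Prod.snd =
      v.map some ++ List.replicate (max u.length v.length - v.length) none :=
  List.map_snd_zip (by simp)

lemma length_padWord (u v : List S) : (padWord u v).length = max u.length v.length := by
  simp [padWord]

lemma wordEval_padEval_take_append_replicate (u : List S) (m j : ℕ) :
    wordEval (padEval e) ((u.map some ++ List.replicate m none).take j) = pathAt e u j := by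
  have hsome : ∀ w : List S, wordEval (padEval e) (w.map some) = wordEval e w := fun w => by
    rw [wordEval, List.map_map]
    rfl
  rw [List.take_append, List.take_replicate, wordEval_append, ← List.map_take, hsome]
  simp [wordEval, pathAt, padEval]

lemma pairDiff_take_padWord (d₀ : G) (u v : List S) (j : ℕ) :
    pairDiff e d₀ ((padWord u v).take j) = (pathAt e u j)⁻¹ * d₀ * pathAt e v j := by
  rw [pairDiff, List.map_take, List.map_take, map_fst_padWord, map_snd_padWord,
    wordEval_padEval_take_append_replicate, wordEval_padEval_take_append_replicate]

lemma pairDiff_padWord (d₀ : G) (u v : List S) :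
    pairDiff e d₀ (padWord u v) = (wordEval e u)⁻¹ * d₀ * wordEval e v := by
  rw [← List.take_length (l := padWord u v), pairDiff_take_padWord, length_padWord,
    pathAt_of_length_le (le_max_left _ _), pathAt_of_length_le (le_max_right _ _)]

lemma padWord_mem_wordDifferenceLanguage_iff {K : ℕ} {d₀ tgt : G} {u v : List S} :
    padWord u v ∈ wordDifferenceLanguage e K d₀ tgt ↔
      (∀ j, wordDist e (pathAt e u j) (d₀ * pathAt e v j) ≤ K) ∧
        (wordEval e u)⁻¹ * d₀ * wordEval e v = tgt := by
  simp only [mem_wordDifferenceLanguage, pairDiff_take_padWord, pairDiff_padWord,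
    wordDist_eq_wordDist_one e (pathAt e u _), mul_assoc]

lemma GeodesicsFellowTravel.padWord_mem_wordDifferenceLanguage_iff {K : ℕ}
    (hK : GeodesicsFellowTravel e K) {u v : List S} (hu : IsGeodesicWord e u)
    (hv : IsGeodesicWord e v) {x y : G} (hx : wordDist e 1 x ≤ 1) (hy : wordDist e 1 y ≤ 1) :
    padWord u v ∈ wordDifferenceLanguage e K x y⁻¹ ↔
      wordEval e u = x * wordEval e v * y := by
  rw [_root_.padWord_mem_wordDifferenceLanguage_iff]
  refine ⟨fun ⟨_, h⟩ => ?_, fun h => ⟨hK u v hu hv x y hx hy h, by rw [h]; group⟩⟩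
  rw [← inv_inv y, ← h]
  group

end WordDifference

lemma exists_biautomaticStructure_of_isRegular {G : Type*} [Group G] {S : Type*} {e : S → G}
    {L : Language S} (hL : L.IsRegular) (hsurj : ∀ g : G, ∃ u ∈ L, wordEval e u = g)
    {M N : Option S → Language (Option S × Option S)}
    (hM : ∀ s, (M s).IsRegular) (hN : ∀ s, (N s).IsRegular)
    (hMmul : ∀ s u v, u ∈ L → v ∈ L →
      (padWord u v ∈ M s ↔ wordEval e u = wordEval e v * padEval e s))
    (hNmul : ∀ s u v, u ∈ L → v ∈ L →
      (padWord u v ∈ N s ↔ wordEval e u = padEval e s * wordEval e v)) :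
    ∃ BS : BiautomaticStructure G S e, BS.toAutomaticStructure.L.accepts = L := by
  obtain ⟨σL, instL, AL, rfl⟩ := hL
  choose σM instM AM hAM using hM
  choose σN instN AN hAN using hN
  exact ⟨{
    σL := σL
    instFinL := instL
    L := AL
    σM := σM
    instFinM := instM
    M := AM
    surjective := hsurj
    mult := fun s u v hu hv => hAM s ▸ hMmul s u v hu hv
    σN := σN
    instFinN := instN
    N := AN
    multLeft := fun s u v hu hv => hAN s ▸ hNmul s u v hu hv }, rfl⟩

/-- Every word-hyperbolic group is biautomatic; moreover the structure can be chosen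
so that the language of normal forms consists of geodesic words. -/
theorem wordHyperbolic_biautomatic
    {G : Type*} [Group G] {S : Type*} [Fintype S] (e : S → G)
    (hsym : ∀ a : S, ∃ b : S, e b = (e a)⁻¹)
    (hgen : Subgroup.closure (Set.range e) = ⊤)
    (hhyp : WordHyperbolic e) :
    ∃ BS : BiautomaticStructure G S e,
      ∀ u ∈ BS.toAutomaticStructure.L.accepts, IsGeodesicWord e u := by
  obtain ⟨δ, hδ⟩ := hhyp
  have hsurj := wordEval_surjective_of_closure_eq_top e hsym hgen
  obtain ⟨K, hK⟩ : ∃ K, GeodesicsFellowTravel e K :=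
    ⟨_, SlimTriangles.geodesicsFellowTravel hsurj hsym hδ⟩
  obtain ⟨BS, hBS⟩ := exists_biautomaticStructure_of_isRegular
    (isRegular_geodesicLanguage hsurj hsym hK) (fun g => exists_isGeodesicWord hsurj g)
    (M := fun s => wordDifferenceLanguage e K 1 (padEval e s)⁻¹)
    (N := fun s => wordDifferenceLanguage e K (padEval e s) 1⁻¹)
    (fun _ => isRegular_wordDifferenceLanguage hsurj _ _ _)
    (fun _ => isRegular_wordDifferenceLanguage hsurj _ _ _)
    (fun s u v hu hv => by
      simpa using hK.padWord_mem_wordDifferenceLanguage_iff hu hv (x := 1) (by simp)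
        (wordDist_one_padEval_le e s))
    (fun s u v hu hv => by
      simpa using hK.padWord_mem_wordDifferenceLanguage_iff hu hv
        (wordDist_one_padEval_le e s) (y := 1) (by simp))
  exact ⟨BS, fun u hu => mem_geodesicLanguage.mp (hBS ▸ hu)⟩
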